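/- Let a clause state with bound n (relative to a CNF I and a trail τ) satisfy Inv1, Inv3, and Inv4. Let α and β be distinct active clauses of ranks a and b respectively (where b ≤ n or b = ∞), and let k ∈ ℕ with k ≤ b and k ≤ n be such that α min-k-subsumes β. Form a new state by: (i) if a > b (in which case b ≤ n), moving α from its group to D_b; (ii) deleting β from its group. Then the new state satisfies Inv1, Inv2, Inv3, and Inv4. -/

import Mathlib

/-- A variable is a natural number. -/
abbrev Var := ℕ

/-- A literal is a pair of a variable and a Boolean polarity. -/
abbrev Lit := Var × Bool

/-- The negation of a literal flips its polarity. -/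
def Lit.neg (l : Lit) : Lit := (l.1, !l.2)

/-- A clause is a finite set of literals. -/
abbrev Clause := Finset Lit

/-- A total assignment. -/
abbrev Assignment := Var → Bool

/-- A trail is a finite list of (literal, decision level) pairs. -/
abbrev Trail := List (Lit × ℕ)

/-- An assignment satisfies a literal `(v, b)` iff it assigns `b` to `v`. -/
def SatLit (σ : Assignment) (l : Lit) : Prop := σ l.1 = l.2

/-- An assignment satisfies a clause iff it satisfies one of its literals. -/
def SatClause (σ : Assignment) (c : Clause) : Prop := ∃ l ∈ c, SatLit σ l

/-- An assignment satisfies a set of clauses iff it satisfies every clause in it. -/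
def SatSet (σ : Assignment) (Γ : Set Clause) : Prop := ∀ c ∈ Γ, SatClause σ c

/-- Entry `i` of trail `τ` is a decision: its level is positive and
no earlier entry has the same level. -/
def IsDecision (τ : Trail) (i : Fin τ.length) : Prop :=
  0 < (τ.get i).2 ∧ ∀ j : Fin τ.length, j < i → (τ.get j).2 ≠ (τ.get i).2

/-- `τ` is a trail for the input CNF `I`. -/
structure IsTrail (I : Finset Clause) (τ : Trail) : Prop where
  nodupVars : (τ.map (fun e => e.1.1)).Nodup
  levelsMono : (τ.map Prod.snd).Pairwise (· ≤ ·)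
  implied : ∀ i : Fin τ.length, ¬ IsDecision τ i →
    ∀ σ : Assignment, SatSet σ ↑I →
      (∀ j : Fin τ.length, j < i → IsDecision τ j → SatLit σ (τ.get j).1) →
      SatLit σ (τ.get i).1

/-- `τ^{≤d}`: the longest prefix of `τ` whose entries all have level `≤ d`. -/
def Trail.upTo (τ : Trail) (d : ℕ) : Trail := τ.takeWhile (fun e => e.2 ≤ d)

/-- An assignment satisfies (the literal of) every entry of a trail. -/
def SatTrail (σ : Assignment) (τ : Trail) : Prop := ∀ e ∈ τ, SatLit σ e.1

/-- `Γ →^d Δ` relative to `τ`. -/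
def ImpliesAt (τ : Trail) (d : ℕ) (Γ Δ : Set Clause) : Prop :=
  ∀ σ : Assignment, SatTrail σ (τ.upTo d) → SatSet σ Γ → SatSet σ Δ

/-- `Γ ↔^d Δ` relative to `τ`. -/
def EquivAt (τ : Trail) (d : ℕ) (Γ Δ : Set Clause) : Prop :=
  ImpliesAt τ d Γ Δ ∧ ImpliesAt τ d Δ Γ

/-- `α^{≤d}`: literals of `α` whose negation is not the literal of any entry of `τ^{≤d}`. -/
def Clause.upTo (τ : Trail) (d : ℕ) (α : Clause) : Clause :=
  α.filter (fun l => ∀ e ∈ τ.upTo d, e.1 ≠ Lit.neg l)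

/-- `α` d-subsumes `β` (relative to `τ`). -/
def SubsumesAt (τ : Trail) (d : ℕ) (α β : Clause) : Prop :=
  Clause.upTo τ d α ⊆ Clause.upTo τ d β

/-- `α` min-k-subsumes `β` (relative to `τ`). -/
def MinSubsumesAt (τ : Trail) (k : ℕ) (α β : Clause) : Prop :=
  SubsumesAt τ k α β ∧ ∀ d' < k, ¬ SubsumesAt τ d' α β

/-- `α` and `β` are resolvable on `x`. -/
def Resolvable (α β : Clause) (x : Var) : Prop := (x, true) ∈ α ∧ (x, false) ∈ β

/-- The resolveOn `α ⊗ₓ β`. -/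
def resolveOn (α β : Clause) (x : Var) : Clause := α.erase (x, true) ∪ β.erase (x, false)

/-- A clause state: groups `Dᵢ` (meaningful for `i ≤ n`), temporary clauses `D∞`,
and stashed groups `Sᵢ^q` (meaningful for `q < i ≤ n`). -/
structure ClauseState where
  D : ℕ → Set Clause
  Dinf : Set Clause
  Stash : ℕ → ℕ → Set Clause

/-- `Sᵢ := ⋃_{q<i} Sᵢ^q`. -/
def ClauseState.Sl (st : ClauseState) (i : ℕ) : Set Clause :=
  {α | ∃ q < i, α ∈ st.Stash i q}

/-- `S := ⋃_{1≤i≤n} Sᵢ`. -/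
def ClauseState.Sall (st : ClauseState) (n : ℕ) : Set Clause :=
  {α | ∃ i, 1 ≤ i ∧ i ≤ n ∧ α ∈ st.Sl i}

/-- `S⁰ := ⋃_{0<i≤n} Sᵢ^0`. -/
def ClauseState.S0 (st : ClauseState) (n : ℕ) : Set Clause :=
  {α | ∃ i, 0 < i ∧ i ≤ n ∧ α ∈ st.Stash i 0}

/-- The pervasive clauses `P := D₀ ∪ S⁰`. -/
def ClauseState.P (st : ClauseState) (n : ℕ) : Set Clause := st.D 0 ∪ st.S0 n

/-- The active-non-temporary clauses `N := ⋃_{0≤i≤n} Dᵢ`. -/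
def ClauseState.N (st : ClauseState) (n : ℕ) : Set Clause := {α | ∃ i ≤ n, α ∈ st.D i}

/-- The active clauses `A := N ∪ D∞`. -/
def ClauseState.A (st : ClauseState) (n : ℕ) : Set Clause := st.N n ∪ st.Dinf

/-- Inv1 (input-equivalence): `I ↔⁰ P`. -/
def Inv1 (I : Finset Clause) (τ : Trail) (st : ClauseState) (n : ℕ) : Prop :=
  EquivAt τ 0 ↑I (st.P n)

/-- Inv2 (correctness): `N ↔ⁿ P`. -/
def Inv2 (τ : Trail) (st : ClauseState) (n : ℕ) : Prop :=
  EquivAt τ n (st.N n) (st.P n)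

/-- The representation condition on a clause `α` stashed at level `i`. -/
def Represented (τ : Trail) (st : ClauseState) (n i : ℕ) (α : Clause) : Prop :=
  (∃ r ≤ i, ∃ β ∈ st.D r, ImpliesAt τ i {β} {α}) ∨
  (∃ r ≤ i, ∃ j, i < j ∧ j ≤ n ∧ ∃ β ∈ st.Stash j r, ImpliesAt τ i {β} {α}) ∨
  ImpliesAt τ i ∅ {α}

/-- Inv3 (representation). -/
def Inv3 (τ : Trail) (st : ClauseState) (n : ℕ) : Prop :=
  ∀ i, 1 ≤ i → i ≤ n → ∀ α ∈ st.Sl i, Represented τ st n i α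

/-- Inv4 (closure): every active or stashed clause is 0-implied by `P`. -/
def Inv4 (τ : Trail) (st : ClauseState) (n : ℕ) : Prop :=
  ∀ γ ∈ st.A n ∪ st.Sall n, ImpliesAt τ 0 (st.P n) {γ}

/-- All four BI invariants. -/
def Invs (I : Finset Clause) (τ : Trail) (st : ClauseState) (n : ℕ) : Prop :=
  Inv1 I τ st n ∧ Inv2 τ st n ∧ Inv3 τ st n ∧ Inv4 τ st n

section Helpers

lemma mem_upTo_mono {τ : Trail} {d d' : ℕ} (h : d ≤ d') :
    ∀ e ∈ τ.upTo d, e ∈ τ.upTo d' := by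
  induction τ with
  | nil => simp [Trail.upTo]
  | cons x xs ih =>
    intro e he
    by_cases hx : x.2 ≤ d
    · simp only [Trail.upTo, List.takeWhile_cons, decide_eq_true_eq, hx, hx.trans h,
        if_true, decide_true, List.mem_cons] at he ⊢
      rcases he with he | he
      · exact Or.inl he
      · exact Or.inr (ih e he)
    · simp [Trail.upTo, List.takeWhile_cons, hx] at he

lemma satTrail_anti {σ : Assignment} {τ : Trail} {d d' : ℕ} (h : d ≤ d')
    (hs : SatTrail σ (τ.upTo d')) : SatTrail σ (τ.upTo d) :=
  fun e he => hs e (mem_upTo_mono h e he)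

lemma impliesAt_mono {τ : Trail} {Γ Δ : Set Clause} {d d' : ℕ} (h : d ≤ d')
    (hi : ImpliesAt τ d Γ Δ) : ImpliesAt τ d' Γ Δ :=
  fun σ hT hΓ => hi σ (satTrail_anti h hT) hΓ

lemma impliesAt_of_subset {τ : Trail} {d : ℕ} {Γ Δ : Set Clause} (h : Δ ⊆ Γ) :
    ImpliesAt τ d Γ Δ :=
  fun _ _ hΓ c hc => hΓ c (h hc)

lemma impliesAt_single_mem {τ : Trail} {d : ℕ} {Γ : Set Clause} {δ : Clause} (h : δ ∈ Γ) :
    ImpliesAt τ d Γ {δ} :=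
  impliesAt_of_subset (Set.singleton_subset_iff.2 h)

lemma impliesAt_refl {τ : Trail} {d : ℕ} {γ : Clause} : ImpliesAt τ d {γ} {γ} :=
  impliesAt_of_subset subset_rfl

lemma impliesAt_weaken {τ : Trail} {d : ℕ} {Γ Γ' Δ : Set Clause} (h : Γ ⊆ Γ')
    (hi : ImpliesAt τ d Γ Δ) : ImpliesAt τ d Γ' Δ :=
  fun σ hT hΓ => hi σ hT (fun c hc => hΓ c (h hc))

lemma impliesAt_trans {τ : Trail} {d : ℕ} {Γ Δ Θ : Set Clause}
    (h1 : ImpliesAt τ d Γ Δ) (h2 : ImpliesAt τ d Δ Θ) : ImpliesAt τ d Γ Θ :=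
  fun σ hT hΓ => h2 σ hT (h1 σ hT hΓ)

lemma impliesAt_forall {τ : Trail} {d : ℕ} {Γ Δ : Set Clause}
    (h : ∀ γ ∈ Δ, ImpliesAt τ d Γ {γ}) : ImpliesAt τ d Γ Δ :=
  fun σ hT hΓ c hc => h c hc σ hT hΓ c rfl

lemma subsumes_implies {τ : Trail} {d : ℕ} {α β : Clause} (h : SubsumesAt τ d α β) :
    ImpliesAt τ d {α} {β} := by
  intro σ hT hα c hc
  rw [Set.mem_singleton_iff] at hc; subst hc
  obtain ⟨l, hl, hsl⟩ := hα α rfl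
  have hl' : l ∈ Clause.upTo τ d α := by
    rw [Clause.upTo, Finset.mem_filter]
    refine ⟨hl, fun e he hne => ?_⟩
    have h2 := hT e he
    rw [hne] at h2
    simp only [SatLit, Lit.neg] at h2 hsl
    rw [hsl] at h2
    exact Bool.not_ne_self l.2 h2.symm
  exact ⟨l, (Finset.mem_filter.1 (h hl')).1, hsl⟩

lemma stash_implied_aux (τ : Trail) (st : ClauseState) (n : ℕ) (h3 : Inv3 τ st n) :
    ∀ m i, n - i < m → i ≤ n → ∀ γ ∈ st.Sl i, ImpliesAt τ n (st.N n) {γ} := by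
  intro m
  induction m with
  | zero => intro i hm; omega
  | succ m ih =>
    intro i hm hin γ hγ
    obtain ⟨q, hqi, hmem⟩ := hγ
    rcases h3 i (by omega) hin γ ⟨q, hqi, hmem⟩ with
      ⟨r, hri, δ, hδ, himp⟩ | ⟨r, hri, j, hij, hjn, δ, hδ, himp⟩ | hsat
    · exact impliesAt_trans (impliesAt_single_mem ⟨r, hri.trans hin, hδ⟩)
        (impliesAt_mono hin himp)
    · exact impliesAt_trans (ih j (by omega) hjn δ ⟨r, by omega, hδ⟩)
        (impliesAt_mono hin himp)
    · exact impliesAt_weaken (Set.empty_subset _) (impliesAt_mono hin hsat)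

lemma main_lemma (I : Finset Clause) (τ : Trail)
    (st : ClauseState) (n : ℕ)
    (h1 : Inv1 I τ st n) (h3 : Inv3 τ st n) (h4 : Inv4 τ st n)
    (α β : Clause)
    (st' : ClauseState) (hS : st'.Stash = st.Stash)
    (hA : st'.A n ⊆ st.A n)
    (hD0low : st.D 0 \ {β} ⊆ st'.D 0)
    (hD0high : ∀ γ ∈ st'.D 0, γ ∈ st.D 0 ∨ ImpliesAt τ 0 (st.P n) {γ})
    (hβ0 : β ∈ st.D 0 → β ∈ st'.D 0 ∨ (α ∈ st'.D 0 ∧ ImpliesAt τ 0 {α} {β}))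
    (hDfix : ∀ r, ∀ γ ∈ st.D r, ∀ i, r ≤ i → i ≤ n →
        ∃ r' ≤ i, ∃ δ ∈ st'.D r', ImpliesAt τ i {δ} {γ}) :
    Invs I τ st' n := by
  have hSl : st'.Sl = st.Sl := by funext i; simp [ClauseState.Sl, hS]
  have hSall : st'.Sall n = st.Sall n := by simp [ClauseState.Sall, hSl]
  have hS0 : st'.S0 n = st.S0 n := by simp [ClauseState.S0, hS]
  have hPP' : ImpliesAt τ 0 (st.P n) (st'.P n) := by
    apply impliesAt_forall
    intro γ hγ
    rcases (hγ : γ ∈ st'.D 0 ∨ γ ∈ st'.S0 n) with hγ | hγ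
    · rcases hD0high γ hγ with h | h
      · exact impliesAt_single_mem (Or.inl h)
      · exact h
    · exact impliesAt_single_mem (Or.inr (hS0 ▸ hγ))
  have hP'P : ImpliesAt τ 0 (st'.P n) (st.P n) := by
    apply impliesAt_forall
    intro γ hγ
    rcases (hγ : γ ∈ st.D 0 ∨ γ ∈ st.S0 n) with hγ | hγ
    · by_cases hγβ : γ = β
      · subst hγβ
        rcases hβ0 hγ with h | ⟨hαm, himp⟩
        · exact impliesAt_single_mem (Or.inl h)
        · exact impliesAt_trans (impliesAt_single_mem (Or.inl hαm)) himp
      · exact impliesAt_single_mem (Or.inl (hD0low ⟨hγ, hγβ⟩))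
    · exact impliesAt_single_mem (Or.inr (hS0 ▸ hγ))
  have h3' : Inv3 τ st' n := by
    intro i h1i hin γ hγ
    rw [hSl] at hγ
    rcases h3 i h1i hin γ hγ with ⟨r, hri, δ, hδ, himp⟩ | hrest | hsat
    · obtain ⟨r', hr'i, δ', hδ', himp'⟩ := hDfix r δ hδ i hri hin
      exact Or.inl ⟨r', hr'i, δ', hδ', impliesAt_trans himp' himp⟩
    · obtain ⟨r, hri, j, hij, hjn, δ, hδ, himp⟩ := hrest
      exact Or.inr (Or.inl ⟨r, hri, j, hij, hjn, δ, by rw [hS]; exact hδ, himp⟩)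
    · exact Or.inr (Or.inr hsat)
  have h4' : Inv4 τ st' n := by
    intro γ hγ
    have hmem : γ ∈ st.A n ∪ st.Sall n := by
      rcases hγ with hγ | hγ
      · exact Or.inl (hA hγ)
      · exact Or.inr (hSall ▸ hγ)
    exact impliesAt_trans hP'P (h4 γ hmem)
  have h2' : Inv2 τ st' n := by
    constructor
    · apply impliesAt_forall
      intro γ hγ
      rcases (hγ : γ ∈ st'.D 0 ∨ γ ∈ st'.S0 n) with hγ | hγ
      · exact impliesAt_single_mem ⟨0, Nat.zero_le n, hγ⟩
      · obtain ⟨i, hi0, hin, hmem⟩ := hγ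
        exact stash_implied_aux τ st' n h3' (n + 1) i (by omega) hin γ ⟨0, hi0, hmem⟩
    · apply impliesAt_forall
      intro γ hγ
      have : γ ∈ st.A n ∪ st.Sall n := Or.inl (hA (Or.inl hγ))
      exact impliesAt_mono (Nat.zero_le n) (impliesAt_trans hP'P (h4 γ this))
  exact ⟨⟨impliesAt_trans h1.1 hPP', impliesAt_trans hP'P h1.2⟩, h2', h3', h4'⟩

end Helpers

/-- the `b ≥ k` case of `Inprocess`: if `α` min-k-subsumes `β`, `k ≤ n`,
`β` is active of rank `b` with `k ≤ b` (`b ≤ n` or `b = ∞`), then promoting `α` to `D_b`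
when its rank `a > b` and deleting `β` preserves all BI invariants. -/
theorem stmt7 (I : Finset Clause) (τ : Trail) (hτ : IsTrail I τ)
    (st : ClauseState) (n : ℕ)
    (h1 : Inv1 I τ st n) (h3 : Inv3 τ st n) (h4 : Inv4 τ st n)
    (α β : Clause) (hαβ : α ≠ β)
    (k : ℕ) (hkn : k ≤ n) (hsub : MinSubsumesAt τ k α β)
    (st' : ClauseState) (hS : st'.Stash = st.Stash)
    (hcase :
      -- β is temporary (rank b = ∞ ≥ every rank a, so α stays put): delete β
      (β ∈ st.Dinf ∧ st'.Dinf = st.Dinf \ {β} ∧ st'.D = st.D)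
      ∨ -- β ∈ D_b with k ≤ b ≤ n
      (∃ b, k ≤ b ∧ b ≤ n ∧ β ∈ st.D b ∧
        ( -- α is temporary (rank a = ∞ > b): move α to D_b, delete β
          (α ∈ st.Dinf ∧ st'.Dinf = st.Dinf \ {α} ∧
            st'.D = fun q => if q = b then st.D b \ {β} ∪ {α} else st.D q)
          ∨ -- α ∈ D_a with a ≤ n
          (∃ a, a ≤ n ∧ α ∈ st.D a ∧ st'.Dinf = st.Dinf ∧
              ((b < a ∧
                st'.D = fun q => if q = b then st.D b \ {β} ∪ {α}
                         else if q = a then st.D a \ {α} else st.D q)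
               ∨ (a ≤ b ∧
                st'.D = fun q => if q = b then st.D b \ {β} else st.D q)))))) :
    Invs I τ st' n := by
  have himpk : ImpliesAt τ k {α} {β} := subsumes_implies hsub.1
  rcases hcase with ⟨hβ, hDinf, hD⟩ | ⟨b, hkb, hbn, hβb, hcase2⟩
  · -- β temporary
    have hN : st'.N n = st.N n := by unfold ClauseState.N; rw [hD]
    apply main_lemma I τ st n h1 h3 h4 α β st' hS
    · intro γ hγ
      rcases hγ with hγ | hγ
      · exact Or.inl (hN ▸ hγ)
      · rw [hDinf] at hγ; exact Or.inr hγ.1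
    · intro γ hγ; rw [hD]; exact hγ.1
    · intro γ hγ; rw [hD] at hγ; exact Or.inl hγ
    · intro h; left; rw [hD]; exact h
    · intro r γ hγ i hri _
      exact ⟨r, hri, γ, by rw [hD]; exact hγ, impliesAt_refl⟩
  · rcases hcase2 with ⟨hαt, hDinf, hD⟩ | ⟨a, han, hαa, hDinf, ⟨hba, hD⟩ | ⟨hab, hD⟩⟩
    · -- α temporary, promoted to D_b
      have hDq : ∀ q, st'.D q = if q = b then st.D b \ {β} ∪ {α} else st.D q :=
        fun q => by rw [hD]
      apply main_lemma I τ st n h1 h3 h4 α β st' hS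
      · intro γ hγ
        rcases hγ with hγ | hγ
        · obtain ⟨i, hin, hmem⟩ := hγ
          rw [hDq i] at hmem
          split_ifs at hmem with h
          · rcases hmem with hm | hm
            · subst h; exact Or.inl ⟨i, hin, hm.1⟩
            · rw [Set.mem_singleton_iff] at hm; subst hm; exact Or.inr hαt
          · exact Or.inl ⟨i, hin, hmem⟩
        · rw [hDinf] at hγ; exact Or.inr hγ.1
      · intro γ hγ
        rw [hDq 0]
        split_ifs with h
        · subst h; exact Or.inl hγ
        · exact hγ.1
      · intro γ hγ
        rw [hDq 0] at hγ
        split_ifs at hγ with h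
        · rcases hγ with hm | hm
          · subst h; exact Or.inl hm.1
          · rw [Set.mem_singleton_iff] at hm
            rw [hm]
            exact Or.inr (h4 α (Or.inl (Or.inr hαt)))
        · exact Or.inl hγ
      · intro hβ0m
        rw [hDq 0]
        split_ifs with h
        · subst h
          refine Or.inr ⟨Or.inr rfl, ?_⟩
          have hk0 : k = 0 := by omega
          exact hk0 ▸ himpk
        · exact Or.inl hβ0m
      · intro r γ hγ i hri hin
        by_cases hrb : r = b
        · subst hrb
          by_cases hγβ : γ = β
          · refine ⟨r, hri, α, ?_, ?_⟩
            · rw [hDq, if_pos rfl]; exact Or.inr rfl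
            · subst hγβ; exact impliesAt_mono (hkb.trans hri) himpk
          · exact ⟨r, hri, γ, by rw [hDq, if_pos rfl]; exact Or.inl ⟨hγ, hγβ⟩,
              impliesAt_refl⟩
        · exact ⟨r, hri, γ, by rw [hDq, if_neg hrb]; exact hγ, impliesAt_refl⟩
    · -- α ∈ D_a, b < a: move α to D_b
      have hDq : ∀ q, st'.D q = if q = b then st.D b \ {β} ∪ {α}
          else if q = a then st.D a \ {α} else st.D q := fun q => by rw [hD]
      apply main_lemma I τ st n h1 h3 h4 α β st' hS
      · intro γ hγ
        rcases hγ with hγ | hγ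
        · obtain ⟨i, hin, hmem⟩ := hγ
          rw [hDq i] at hmem
          split_ifs at hmem with h h'
          · rcases hmem with hm | hm
            · subst h; exact Or.inl ⟨i, hin, hm.1⟩
            · rw [Set.mem_singleton_iff] at hm; subst hm; exact Or.inl ⟨a, han, hαa⟩
          · subst h'; exact Or.inl ⟨i, hin, hmem.1⟩
          · exact Or.inl ⟨i, hin, hmem⟩
        · rw [hDinf] at hγ; exact Or.inr hγ
      · intro γ hγ
        rw [hDq 0]
        split_ifs with h h'
        · subst h; exact Or.inl hγ
        · omega
        · exact hγ.1
      · intro γ hγ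
        rw [hDq 0] at hγ
        split_ifs at hγ with h h'
        · rcases hγ with hm | hm
          · subst h; exact Or.inl hm.1
          · rw [Set.mem_singleton_iff] at hm
            rw [hm]
            exact Or.inr (h4 α (Or.inl (Or.inl ⟨a, han, hαa⟩)))
        · omega
        · exact Or.inl hγ
      · intro hβ0m
        rw [hDq 0]
        split_ifs with h h'
        · subst h
          refine Or.inr ⟨Or.inr rfl, ?_⟩
          have hk0 : k = 0 := by omega
          exact hk0 ▸ himpk
        · omega
        · exact Or.inl hβ0m
      · intro r γ hγ i hri hin
        by_cases hrb : r = b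
        · subst hrb
          by_cases hγβ : γ = β
          · refine ⟨r, hri, α, ?_, ?_⟩
            · rw [hDq, if_pos rfl]; exact Or.inr rfl
            · subst hγβ; exact impliesAt_mono (hkb.trans hri) himpk
          · exact ⟨r, hri, γ, by rw [hDq, if_pos rfl]; exact Or.inl ⟨hγ, hγβ⟩,
              impliesAt_refl⟩
        · by_cases hra : r = a
          · subst hra
            by_cases hγα : γ = α
            · refine ⟨b, by omega, α, ?_, ?_⟩
              · rw [hDq, if_pos rfl]; exact Or.inr rfl
              · subst hγα; exact impliesAt_refl
            · exact ⟨r, hri, γ,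
                by rw [hDq, if_neg hrb, if_pos rfl]; exact ⟨hγ, hγα⟩, impliesAt_refl⟩
          · exact ⟨r, hri, γ, by rw [hDq, if_neg hrb, if_neg hra]; exact hγ,
              impliesAt_refl⟩
    · -- α ∈ D_a, a ≤ b: just delete β
      have hDq : ∀ q, st'.D q = if q = b then st.D b \ {β} else st.D q :=
        fun q => by rw [hD]
      apply main_lemma I τ st n h1 h3 h4 α β st' hS
      · intro γ hγ
        rcases hγ with hγ | hγ
        · obtain ⟨i, hin, hmem⟩ := hγ
          rw [hDq i] at hmem
          split_ifs at hmem with h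
          · subst h; exact Or.inl ⟨i, hin, hmem.1⟩
          · exact Or.inl ⟨i, hin, hmem⟩
        · rw [hDinf] at hγ; exact Or.inr hγ
      · intro γ hγ
        rw [hDq 0]
        split_ifs with h
        · subst h; exact hγ
        · exact hγ.1
      · intro γ hγ
        rw [hDq 0] at hγ
        split_ifs at hγ with h
        · subst h; exact Or.inl hγ.1
        · exact Or.inl hγ
      · intro hβ0m
        rw [hDq 0]
        split_ifs with h
        · subst h
          have ha0 : a = 0 := by omega
          rw [ha0] at hαa
          refine Or.inr ⟨⟨hαa, hαβ⟩, ?_⟩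
          have hk0 : k = 0 := by omega
          exact hk0 ▸ himpk
        · exact Or.inl hβ0m
      · intro r γ hγ i hri hin
        by_cases hrb : r = b
        · subst hrb
          by_cases hγβ : γ = β
          · refine ⟨a, hab.trans hri, α, ?_, ?_⟩
            · rw [hDq]
              split_ifs with h
              · subst h; exact ⟨hαa, hαβ⟩
              · exact hαa
            · subst hγβ; exact impliesAt_mono (hkb.trans hri) himpk
          · exact ⟨r, hri, γ, by rw [hDq, if_pos rfl]; exact ⟨hγ, hγβ⟩, impliesAt_refl⟩
        · exact ⟨r, hri, γ, by rw [hDq, if_neg hrb]; exact hγ, impliesAt_refl⟩
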